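/- arXiv:0710.1253 — 2 statements merged into one kernel-verified Lean document; each statement's English description precedes it below -/
import Mathlib

section
/- Let $R$ be a Noetherian commutative ring, $I \subseteq R$ an ideal, and $M$ an arbitrary $R$-module (not assumed finitely generated). Let $\hat{M} = \varprojlim_n M/I^nM$ denote the $I$-adic completion of $M$. Then the natural map $f \colon M/IM \to \hat{M}/I\hat{M}$, induced by the composition of the canonical map $M \to \hat{M}$ with the quotient $\hat{M} \to \hat{M}/I\hat{M}$, is an isomorphism of $R$-modules. -/
/-!
Since `I` is finitely generated, the kernel of the evaluation `M̂ → M/IM` is exactly `I • M̂`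
(Stacks 05GG), so `M̂/IM̂ ≅ M/IM`, and under this identification the map `M/IM → M̂/IM̂` is the
identity, because evaluating `of x` at level one gives back the class of `x`.
-/

open Submodule LinearMap

theorem Submodule.mapQ_bijective_of_ker_eq {R M N L : Type*} [Ring R]
    [AddCommGroup M] [Module R M] [AddCommGroup N] [Module R N] [AddCommGroup L] [Module R L]
    {P : Submodule R M} {Q : Submodule R N} (f : M →ₗ[R] N) (g : N →ₗ[R] L)
    (hP : ker (g ∘ₗ f) = P) (hQ : ker g = Q) (hgf : Function.Surjective (g ∘ₗ f))
    (h : P ≤ Q.comap f) :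
    Function.Bijective (P.mapQ Q f h) := by
  refine ⟨(injective_iff_map_eq_zero _).mpr ?_, ?_⟩
  · intro x hx
    obtain ⟨m, rfl⟩ := Quotient.mk_surjective P x
    rw [mapQ_apply, Quotient.mk_eq_zero, ← hQ, mem_ker] at hx
    rw [Quotient.mk_eq_zero, ← hP, mem_ker, comp_apply, hx]
  · intro y
    obtain ⟨y, rfl⟩ := Quotient.mk_surjective Q y
    obtain ⟨m, hm⟩ := hgf (g y)
    refine ⟨Quotient.mk m, ?_⟩
    rw [mapQ_apply, Quotient.eq, ← hQ, mem_ker, map_sub, ← comp_apply, hm, sub_self]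

/-- Let `R` be a Noetherian commutative ring, `I ⊆ R` an ideal, and `M` an arbitrary
`R`-module. Then the natural map `M/IM → M̂/IM̂` induced by the canonical map
`M → M̂ = lim M/IⁿM` (the `I`-adic completion) is an isomorphism. -/
theorem forgetful_completion_mod_I_bijective
    (R : Type*) [CommRing R] [IsNoetherianRing R] (I : Ideal R)
    (M : Type*) [AddCommGroup M] [Module R M] :
    Function.Bijective
      (Submodule.mapQ (I • (⊤ : Submodule R M))
        (I • (⊤ : Submodule R (AdicCompletion I M)))
        (AdicCompletion.of I M)
        (by
          rw [← Submodule.map_le_iff_le_comap, Submodule.map_smul'']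
          exact smul_mono_right I (le_top (a := Submodule.map (AdicCompletion.of I M) ⊤)))) := by
  refine mapQ_bijective_of_ker_eq _ (AdicCompletion.eval I M 1) ?_ ?_ ?_ _
  · rw [AdicCompletion.eval_comp_of, ker_mkQ, pow_one]
  · rw [← AdicCompletion.pow_smul_top_eq_ker_eval (IsNoetherian.noetherian I), pow_one]
  · rw [AdicCompletion.eval_comp_of]
    exact mkQ_surjective _
end

section
/- Let $R$ be a Noetherian commutative ring, $I \subseteq R$ an ideal, and $M$ an arbitrary $R$-module. Let $\hat{M} = \varprojlim_n M/I^nM$ be the $I$-adic completion of $M$, and let $\hat{\pi} \colon \hat{M} \to M/IM$ be the natural map sending a coherent sequence $(m_1, m_2, \ldots)$ to its first component $m_1$. Then the kernel of $\hat{\pi}$ equals the submodule $I\hat{M}$ of $\hat{M}$; that is, a coherent sequence $\mu \in \hat{M}$ satisfies $\hat{\pi}(\mu) = 0$ if and only if $\mu \in I\hat{M}$. -/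
/-- Let `R` be a Noetherian commutative ring, `I ⊆ R` an ideal, and `M` an arbitrary
`R`-module.  The kernel of the natural map `π̂ : M̂ → M/IM` from the `I`-adic completion
(sending a coherent sequence to its first component) is exactly the submodule `I M̂`;
that is, `π̂ μ = 0` if and only if `μ ∈ I M̂`. -/
theorem ker_eval_one_eq_smul
    (R : Type*) [CommRing R] [IsNoetherianRing R] (I : Ideal R)
    (M : Type*) [AddCommGroup M] [Module R M] :
    LinearMap.ker (AdicCompletion.eval I M 1) =
      I • (⊤ : Submodule R (AdicCompletion I M)) := by
  rw [← AdicCompletion.pow_smul_top_eq_ker_eval (IsNoetherian.noetherian I), pow_one]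
end
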